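/- arXiv:2510.14639 — 2 statements merged into one kernel-verified Lean document; each statement's English description precedes it below -/
import Mathlib

section
/- For every n ∈ ℕ, the convolution of the normalized Gaussian ψ_0 with the n-th normalized Hermite function ψ_n satisfies (ψ_0 * ψ_n)(u) = u^n/√(n! 2^n) · e^{-u²/4} for all u ∈ ℝ. -/
open MeasureTheory Real

/-- Creation operator `a⁺ f = x·f - f'`. -/
noncomputable def aPlus (f : ℝ → ℝ) : ℝ → ℝ := fun x => x * f x - deriv f x

/-- Hermite functions `h_n = (a⁺)^n e^{-x²/2} = H_n(x) e^{-x²/2}`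
(`H_n` the physicists' Hermite polynomial). -/
noncomputable def hermiteFn (n : ℕ) : ℝ → ℝ :=
  aPlus^[n] (fun x => Real.exp (-x ^ 2 / 2))

/-- Normalized Hermite functions `ψ_n = h_n / √(n! 2^n √π)`. -/
noncomputable def psiFn (n : ℕ) (x : ℝ) : ℝ :=
  hermiteFn n x / Real.sqrt ((n.factorial : ℝ) * 2 ^ n * Real.sqrt π)

open Filter Polynomial

noncomputable def Pn : ℕ → ℝ[X]
  | 0 => 1
  | n+1 => Polynomial.C 2 * Polynomial.X * Pn n - (Pn n).derivative

lemma norm_bound (k : ℕ) (x : ℝ) :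
    ‖x ^ k * Real.exp (-x ^ 2)‖ ≤ (k.factorial : ℝ) * Real.exp (1/2) * Real.exp (-(1/2) * x ^ 2) := by
  rw [norm_mul, norm_pow, Real.norm_eq_abs, Real.norm_eq_abs, abs_exp]
  have h1 : |x| ^ k ≤ (k.factorial : ℝ) * Real.exp |x| := by
    have := Real.pow_div_factorial_le_exp |x| (abs_nonneg x) k
    rw [div_le_iff₀ (by positivity)] at this
    calc |x| ^ k ≤ Real.exp |x| * k.factorial := this
    _ = _ := by ring
  calc |x| ^ k * Real.exp (-x ^ 2) ≤ ((k.factorial : ℝ) * Real.exp |x|) * Real.exp (-x ^ 2) := by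
        apply mul_le_mul_of_nonneg_right h1 (Real.exp_pos _).le
    _ = (k.factorial : ℝ) * Real.exp (|x| - x ^ 2) := by rw [mul_assoc, ← Real.exp_add]; ring_nf
    _ ≤ (k.factorial : ℝ) * Real.exp (1/2 + -(1/2) * x ^ 2) := by
        apply mul_le_mul_of_nonneg_left (Real.exp_le_exp.2 ?_) (by positivity)
        nlinarith [sq_nonneg (|x| - 1), sq_abs x]
    _ = _ := by rw [Real.exp_add]; ring

lemma integrable_pow_mul (k : ℕ) : Integrable (fun x : ℝ => x ^ k * Real.exp (-x ^ 2)) := by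
  apply Integrable.mono' ((integrable_exp_neg_mul_sq (by norm_num : (0:ℝ) < 1/2)).const_mul
    ((k.factorial : ℝ) * Real.exp (1/2)))
  · exact (Continuous.mul (continuous_pow k) (by continuity)).aestronglyMeasurable
  · filter_upwards with x
    simpa [mul_assoc] using norm_bound k x

lemma tendsto_pow_mul (k : ℕ) (l : Filter ℝ)
    (hl : Tendsto (fun x : ℝ => -(1/2) * x ^ 2) l atBot) :
    Tendsto (fun x : ℝ => x ^ k * Real.exp (-x ^ 2)) l (nhds 0) := by
  apply squeeze_zero_norm (norm_bound k)
  have : Tendsto (fun x : ℝ => Real.exp (-(1/2) * x ^ 2)) l (nhds 0) :=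
    Real.tendsto_exp_atBot.comp hl
  simpa using this.const_mul ((k.factorial : ℝ) * Real.exp (1/2))

lemma integrable_poly_mul (p : ℝ[X]) : Integrable (fun x : ℝ => p.eval x * Real.exp (-x ^ 2)) := by
  have : (fun x : ℝ => p.eval x * Real.exp (-x ^ 2)) =
      fun x => ∑ i ∈ Finset.range (p.natDegree + 1), p.coeff i * (x ^ i * Real.exp (-x ^ 2)) := by
    funext x
    rw [p.eval_eq_sum_range x, Finset.sum_mul]
    congr 1; funext i; ring
  rw [this]
  exact integrable_finset_sum _ fun i _ => (integrable_pow_mul i).const_mul _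

lemma tendsto_mul_sq_atBot (l : Filter ℝ) (hl : l = atTop ∨ l = atBot) :
    Tendsto (fun x : ℝ => -(1/2) * x ^ 2) l atBot := by
  have h : Tendsto (fun x : ℝ => x ^ 2) l atTop := by
    rcases hl with rfl | rfl
    · exact tendsto_pow_atTop (by norm_num)
    · have : Tendsto (fun x : ℝ => (-x) ^ 2) atBot atTop :=
        (tendsto_pow_atTop (n := 2) (by norm_num)).comp tendsto_neg_atBot_atTop
      exact this.congr (fun x => by ring)
  have h2 : Tendsto (fun x : ℝ => (1/2 : ℝ) * x ^ 2) l atTop :=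
    h.const_mul_atTop (by norm_num)
  have h3 := tendsto_neg_atTop_atBot.comp h2
  exact h3.congr (fun x => by simp)

lemma tendsto_poly_mul (p : ℝ[X]) (l : Filter ℝ)
    (hl : Tendsto (fun x : ℝ => -(1/2) * x ^ 2) l atBot) :
    Tendsto (fun x : ℝ => p.eval x * Real.exp (-x ^ 2)) l (nhds 0) := by
  have : (fun x : ℝ => p.eval x * Real.exp (-x ^ 2)) =
      fun x => ∑ i ∈ Finset.range (p.natDegree + 1), p.coeff i * (x ^ i * Real.exp (-x ^ 2)) := by
    funext x
    rw [p.eval_eq_sum_range x, Finset.sum_mul]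
    congr 1; funext i; ring
  rw [this]
  have := tendsto_finset_sum (Finset.range (p.natDegree + 1))
    (fun i _ => ((tendsto_pow_mul i l hl).const_mul (p.coeff i)))
  simpa using this

lemma hasDerivAt_G (p : ℝ[X]) (c x : ℝ) :
    HasDerivAt (fun y => p.eval y * Real.exp (-(y - c) ^ 2))
      ((p.derivative.eval x - 2 * (x - c) * p.eval x) * Real.exp (-(x - c) ^ 2)) x := by
  have hinner : HasDerivAt (fun y : ℝ => -(y - c) ^ 2) (-(2 * (x - c))) x := by
    have := (((hasDerivAt_id x).sub_const c).pow 2).neg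
    exact this.congr_deriv (by simp)
  have hexp := hinner.exp
  have := (p.hasDerivAt x).mul hexp
  exact this.congr_deriv (by ring)

lemma hasDerivAt_pe (p : ℝ[X]) (x : ℝ) :
    HasDerivAt (fun y => p.eval y * Real.exp (-y ^ 2 / 2))
      ((p.derivative.eval x - x * p.eval x) * Real.exp (-x ^ 2 / 2)) x := by
  have hinner : HasDerivAt (fun y : ℝ => -y ^ 2 / 2) (-x) x := by
    exact (((hasDerivAt_pow 2 x).neg).div_const 2).congr_deriv (by norm_num; ring)
  have := (p.hasDerivAt x).mul hinner.exp
  exact this.congr_deriv (by ring)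

lemma hermiteFn_eq (n : ℕ) :
    hermiteFn n = fun x => (Pn n).eval x * Real.exp (-x ^ 2 / 2) := by
  induction n with
  | zero => funext x; simp [hermiteFn, Pn]
  | succ n ih =>
    have : hermiteFn (n + 1) = aPlus (hermiteFn n) := by
      rw [hermiteFn, Function.iterate_succ_apply', ← hermiteFn]
    rw [this, ih]
    funext x
    have hd : deriv (fun y => (Pn n).eval y * Real.exp (-y ^ 2 / 2)) x
        = ((Pn n).derivative.eval x - x * (Pn n).eval x) * Real.exp (-x ^ 2 / 2) :=
      (hasDerivAt_pe (Pn n) x).deriv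
    simp only [aPlus, hd, Pn, Polynomial.eval_sub, Polynomial.eval_mul, Polynomial.eval_C,
      Polynomial.eval_X]
    ring

lemma G_eq (p : ℝ[X]) (c : ℝ) : (fun x : ℝ => p.eval x * Real.exp (-(x - c) ^ 2))
    = (fun y => (p.comp (X + Polynomial.C c)).eval y * Real.exp (-y ^ 2)) ∘ (fun x => x - c) := by
  funext x; simp [Function.comp, Polynomial.eval_comp]

lemma integrable_G (p : ℝ[X]) (c : ℝ) :
    Integrable (fun x : ℝ => p.eval x * Real.exp (-(x - c) ^ 2)) := by
  rw [G_eq]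
  exact (integrable_poly_mul _).comp_sub_right c

lemma tendsto_sub_top (c : ℝ) : Tendsto (fun x : ℝ => x - c) atTop atTop :=
  (tendsto_atTop_add_const_right atTop (-c) tendsto_id).congr fun x => (sub_eq_add_neg x c).symm

lemma tendsto_sub_bot (c : ℝ) : Tendsto (fun x : ℝ => x - c) atBot atBot :=
  (tendsto_atBot_add_const_right atBot (-c) tendsto_id).congr fun x => (sub_eq_add_neg x c).symm

lemma tendsto_G_top (p : ℝ[X]) (c : ℝ) :
    Tendsto (fun x : ℝ => p.eval x * Real.exp (-(x - c) ^ 2)) atTop (nhds 0) := by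
  rw [G_eq]
  exact (tendsto_poly_mul _ atTop (tendsto_mul_sq_atBot _ (Or.inl rfl))).comp (tendsto_sub_top c)

lemma tendsto_G_bot (p : ℝ[X]) (c : ℝ) :
    Tendsto (fun x : ℝ => p.eval x * Real.exp (-(x - c) ^ 2)) atBot (nhds 0) := by
  rw [G_eq]
  exact (tendsto_poly_mul _ atBot (tendsto_mul_sq_atBot _ (Or.inr rfl))).comp (tendsto_sub_bot c)

lemma integral_deriv_zero (f f' : ℝ → ℝ) (hd : ∀ x, HasDerivAt f (f' x) x)
    (hi : Integrable f') (h1 : Tendsto f atTop (nhds 0)) (h2 : Tendsto f atBot (nhds 0)) :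
    ∫ x : ℝ, f' x = 0 := by
  have A : ∫ x in Set.Ioi (0:ℝ), f' x = 0 - f 0 :=
    integral_Ioi_of_hasDerivAt_of_tendsto' (fun x _ => hd x) hi.integrableOn h1
  have B : ∫ x in Set.Iic (0:ℝ), f' x = f 0 - 0 :=
    integral_Iic_of_hasDerivAt_of_tendsto' (fun x _ => hd x) hi.integrableOn h2
  rw [← intervalIntegral.integral_Iic_add_Ioi (b := (0:ℝ)) hi.integrableOn hi.integrableOn, A, B]
  ring

lemma key (n : ℕ) (u : ℝ) :
    ∫ x : ℝ, (Pn n).eval x * Real.exp (-(x - u/2) ^ 2) = Real.sqrt π * u ^ n := by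
  induction n with
  | zero =>
    simp only [Pn, Polynomial.eval_one, one_mul, pow_zero, mul_one]
    rw [integral_sub_right_eq_self (fun x => Real.exp (-x ^ 2)) (u/2)]
    have := integral_gaussian 1
    simpa using this
  | succ n ih =>
    set c := u/2 with hc
    set p := Pn n with hp
    have hderiv := fun x => hasDerivAt_G p c x
    have hint_d : Integrable (fun x : ℝ =>
        (p.derivative.eval x - 2 * (x - c) * p.eval x) * Real.exp (-(x - c) ^ 2)) := by
      have h := integrable_G (p.derivative - Polynomial.C 2 * (X - Polynomial.C c) * p) c
      have he : (fun x : ℝ => (p.derivative - Polynomial.C 2 * (X - Polynomial.C c) * p).eval x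
          * Real.exp (-(x - c) ^ 2))
          = fun x : ℝ => (p.derivative.eval x - 2 * (x - c) * p.eval x)
            * Real.exp (-(x - c) ^ 2) := by
        funext x
        simp only [Polynomial.eval_sub, Polynomial.eval_mul, Polynomial.eval_C, Polynomial.eval_X]
      rwa [he] at h
    have hzero : ∫ x : ℝ, (p.derivative.eval x - 2 * (x - c) * p.eval x)
        * Real.exp (-(x - c) ^ 2) = 0 :=
      integral_deriv_zero _ _ hderiv hint_d (tendsto_G_top _ _) (tendsto_G_bot _ _)
    have hint_f : Integrable (fun x : ℝ => p.eval x * Real.exp (-(x - c) ^ 2)) :=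
      integrable_G _ _
    have hiden : (fun x : ℝ => (Pn (n+1)).eval x * Real.exp (-(x - c) ^ 2))
        = fun x : ℝ => u * (p.eval x * Real.exp (-(x - c) ^ 2))
          - (p.derivative.eval x - 2 * (x - c) * p.eval x) * Real.exp (-(x - c) ^ 2) := by
      funext x
    -- (2x p - p') e = u p e - (p' - 2(x - u/2) p) e
      simp only [Pn, ← hp, Polynomial.eval_sub, Polynomial.eval_mul, Polynomial.eval_C,
        Polynomial.eval_X, hc]
      ring
    rw [hiden, integral_sub (hint_f.const_mul u) hint_d, integral_const_mul, hzero, ih]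
    ring

/-- `(ψ₀ * ψ_n)(u) = u^n/√(n! 2^n) · e^{-u²/4}`. -/
theorem psi0_conv_psi (n : ℕ) (u : ℝ) :
    (∫ x : ℝ, psiFn 0 (u - x) * psiFn n x)
      = u ^ n / Real.sqrt ((n.factorial : ℝ) * 2 ^ n) * Real.exp (-u ^ 2 / 4) := by
  have hπ : (0:ℝ) < Real.sqrt π := Real.sqrt_pos.2 Real.pi_pos
  have hk : (0:ℝ) < Real.sqrt ((n.factorial : ℝ) * 2 ^ n) := Real.sqrt_pos.2 (by positivity)
  have e1 : Real.sqrt ((n.factorial : ℝ) * 2 ^ n * Real.sqrt π)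
      = Real.sqrt ((n.factorial : ℝ) * 2 ^ n) * Real.sqrt (Real.sqrt π) :=
    Real.sqrt_mul (by positivity) _
  have e2 : Real.sqrt (Real.sqrt π) * Real.sqrt (Real.sqrt π) = Real.sqrt π :=
    Real.mul_self_sqrt (Real.sqrt_nonneg π)
  have hA : (0:ℝ) < Real.sqrt (Real.sqrt π) := Real.sqrt_pos.2 hπ
  have h1 : (fun x : ℝ => psiFn 0 (u - x) * psiFn n x)
      = fun x : ℝ => (Real.exp (-u ^ 2 / 4)
          / (Real.sqrt π * Real.sqrt ((n.factorial : ℝ) * 2 ^ n)))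
        * ((Pn n).eval x * Real.exp (-(x - u/2) ^ 2)) := by
    funext x
    have hexp : Real.exp (-(u - x) ^ 2 / 2) * Real.exp (-x ^ 2 / 2)
        = Real.exp (-u ^ 2 / 4) * Real.exp (-(x - u/2) ^ 2) := by
      rw [← Real.exp_add, ← Real.exp_add]; ring_nf
    simp only [psiFn, hermiteFn_eq, Pn, Polynomial.eval_one, one_mul]
    rw [e1]
    have h00 : Real.sqrt (((Nat.factorial 0 : ℕ) : ℝ) * 2 ^ 0 * Real.sqrt π)
        = Real.sqrt (Real.sqrt π) := by norm_num
    rw [h00]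
    rw [div_mul_div_comm]
    rw [show Real.exp (-(u - x) ^ 2 / 2) * ((Pn n).eval x * Real.exp (-x ^ 2 / 2))
        = (Real.exp (-(u - x) ^ 2 / 2) * Real.exp (-x ^ 2 / 2)) * (Pn n).eval x by ring, hexp]
    field_simp
    linear_combination (-(Pn n).eval x) * e2
  rw [h1, integral_const_mul, key]
  field_simp
end

section
/- For u ∈ ℝ, z ∈ ℂ and m ∈ ℕ, the generating function identity ∑_{n=0}^{∞} (z^n/n!) · H_{m,n}(u/√2, u/√2) = (u/√2 - z)^m · e^{uz/√2} holds. -/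
open Finset Complex

/-- Complex Itô–Hermite polynomial (α = 1), as in the generating formula:
`H_{m,n}(a,b) = ∑_{j=0}^{min(m,n)} (-1)^j j! C(m,j) C(n,j) a^{n-j} b^{m-j}`. -/
noncomputable def itoHermite (m n : ℕ) (a b : ℂ) : ℂ :=
  ∑ j ∈ Finset.range (min m n + 1),
    (-1 : ℂ) ^ j * (j.factorial : ℂ) * (m.choose j : ℂ) * (n.choose j : ℂ) *
      a ^ (n - j) * b ^ (m - j)

/-- Generating function: `∑_{n} (z^n/n!) H_{m,n}(u/√2, u/√2) = (u/√2 - z)^m e^{uz/√2}`. -/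
theorem itoHermite_generating (u : ℝ) (z : ℂ) (m : ℕ) :
    HasSum
      (fun n : ℕ =>
        z ^ n / (n.factorial : ℂ) *
          itoHermite m n ((u : ℂ) / (Real.sqrt 2 : ℂ)) ((u : ℂ) / (Real.sqrt 2 : ℂ)))
      (((u : ℂ) / (Real.sqrt 2 : ℂ) - z) ^ m *
        Complex.exp ((u : ℂ) * z / (Real.sqrt 2 : ℂ))) := by
  set a : ℂ := (u : ℂ) / (Real.sqrt 2 : ℂ) with ha
  have hmul : (u : ℂ) * z / (Real.sqrt 2 : ℂ) = a * z := by rw [ha]; ring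
  rw [hmul]
  set E : ℂ := Complex.exp (a * z) with hE
  -- exponential series
  have hexp : HasSum (fun k : ℕ => (a * z) ^ k / (k.factorial : ℂ)) E := by
    have := NormedSpace.expSeries_div_hasSum_exp (a * z)
    rw [hE, Complex.exp_eq_exp_ℂ]
    exact this
  -- the j-th piece
  set f : ℕ → ℕ → ℂ := fun j n =>
    if j ≤ n then a ^ (n - j) * z ^ n / ((n - j).factorial : ℂ) else 0 with hf
  have hj : ∀ j : ℕ, HasSum (f j) (z ^ j * E) := by
    intro j
    have h1 : HasSum (fun k : ℕ => z ^ j * ((a * z) ^ k / (k.factorial : ℂ))) (z ^ j * E) :=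
      hexp.mul_left _
    have h2 : (fun k : ℕ => f j (k + j)) = fun k : ℕ =>
        z ^ j * ((a * z) ^ k / (k.factorial : ℂ)) := by
      funext k
      simp only [hf, Nat.le_add_left, if_pos, Nat.add_sub_cancel]
      rw [mul_pow, pow_add]
      ring
    have h3 := (hasSum_nat_add_iff (f := f j) j).mp (h2 ▸ h1)
    have h4 : ∑ i ∈ Finset.range j, f j i = 0 := by
      apply Finset.sum_eq_zero
      intro i hi
      simp only [hf]
      rw [if_neg (by simp only [Finset.mem_range] at hi; omega)]
    rw [h4, add_zero] at h3
    exact h3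
  -- sum over j of constant multiples
  have key : HasSum
      (fun n : ℕ => ∑ j ∈ Finset.range (m + 1),
        (-1 : ℂ) ^ j * (m.choose j : ℂ) * a ^ (m - j) * f j n)
      (∑ j ∈ Finset.range (m + 1),
        (-1 : ℂ) ^ j * (m.choose j : ℂ) * a ^ (m - j) * (z ^ j * E)) :=
    hasSum_sum fun j _ => (hj j).mul_left _
  -- identify the target sum
  have hbin : ∑ j ∈ Finset.range (m + 1),
      (-1 : ℂ) ^ j * (m.choose j : ℂ) * a ^ (m - j) * (z ^ j * E) = (a - z) ^ m * E := by
    have hadd := add_pow (-z) a m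
    have : (a - z) ^ m = ∑ j ∈ Finset.range (m + 1),
        (-z) ^ j * a ^ (m - j) * (m.choose j : ℂ) := by
      rw [show a - z = -z + a by ring, hadd]
    rw [this, Finset.sum_mul]
    apply Finset.sum_congr rfl
    intro j _
    rw [neg_pow]
    ring
  rw [← hbin]
  -- pointwise equality
  have hfun : ∀ n : ℕ,
      z ^ n / (n.factorial : ℂ) * itoHermite m n a a =
      ∑ j ∈ Finset.range (m + 1),
        (-1 : ℂ) ^ j * (m.choose j : ℂ) * a ^ (m - j) * f j n := by
    intro n
    rw [itoHermite, Finset.mul_sum]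
    rw [← Finset.sum_subset (Finset.range_subset_range.mpr
      (by omega : min m n + 1 ≤ m + 1))]
    · apply Finset.sum_congr rfl
      intro j hjmem
      have hjn : j ≤ n := by
        simp only [Finset.mem_range] at hjmem; omega
      simp only [hf, if_pos hjn]
      have hfac : (n.choose j : ℂ) * (j.factorial : ℂ) * ((n - j).factorial : ℂ)
          = (n.factorial : ℂ) := by
        exact_mod_cast congrArg (Nat.cast (R := ℂ))
          (Nat.choose_mul_factorial_mul_factorial hjn)
      have h1 : ((n - j).factorial : ℂ) ≠ 0 := Nat.cast_ne_zero.mpr (Nat.factorial_ne_zero _)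
      have h2 : (n.factorial : ℂ) ≠ 0 := Nat.cast_ne_zero.mpr (Nat.factorial_ne_zero _)
      field_simp
      linear_combination z ^ n * a ^ (n - j) * a ^ (m - j)
        * (m.choose j : ℂ) * hfac
    · intro j hjm hjnot
      have hjn : ¬ j ≤ n := by
        simp only [Finset.mem_range] at hjm hjnot; omega
      simp only [hf, if_neg hjn, mul_zero]
  rw [show (fun n : ℕ => z ^ n / (n.factorial : ℂ) * itoHermite m n a a) = _ from funext hfun]
  exact key
end
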